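/- arXiv:2602.16480 — 3 statements merged into one kernel-verified Lean document; each statement's English description precedes it below -/
import Mathlib

section
/- Let N be a natural number with N > 1 and let u be a unit of the ring ZMod (N²) whose underlying element is 1 + N. Then the multiplicative order of u in the unit group (ZMod (N²))ˣ equals N. -/
/-!
Since `N * N = 0` in `ZMod (N²)`, the binomial expansion of `(1 + N) ^ k` collapses to
`1 + k * N`, so `(1 + N) ^ k = 1` exactly when `k • N = 0`: the multiplicative order of `1 + N`
is the additive order of `N`, which is `N² / gcd (N², N) = N`.
-/

theorem one_add_pow_of_mul_self_eq_zero {R : Type*} [Semiring R] {a : R} (ha : a * a = 0)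
    (k : ℕ) : (1 + a) ^ k = 1 + k * a := by
  induction k with
  | zero => simp
  | succ k ih =>
    rw [pow_succ, ih, Nat.cast_succ]
    simp only [mul_add, add_mul, mul_one, one_mul, mul_assoc, ha, mul_zero, add_zero]
    abel

theorem orderOf_one_add_eq_addOrderOf {R : Type*} [Ring R] {a : R} (ha : a * a = 0) :
    orderOf (1 + a) = addOrderOf a := by
  rw [← orderOf_ofAdd_eq_addOrderOf, orderOf_eq_orderOf_iff]
  intro k
  rw [one_add_pow_of_mul_self_eq_zero ha, ← ofAdd_nsmul, ofAdd_eq_one, add_eq_left, nsmul_eq_mul]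

theorem ZMod.natCast_mul_self_eq_zero_of_sq (N : ℕ) : (N : ZMod (N ^ 2)) * N = 0 := by
  rw [← Nat.cast_mul, ← sq, ZMod.natCast_self]

theorem ZMod.addOrderOf_natCast_of_sq {N : ℕ} (hN : 0 < N) : addOrderOf (N : ZMod (N ^ 2)) = N := by
  rw [ZMod.addOrderOf_coe _ (by positivity), Nat.gcd_eq_right (dvd_pow_self N two_ne_zero), sq,
    Nat.mul_div_cancel _ hN]

/-- For `N > 1`, the unit of `ZMod (N²)` whose underlying element is `1 + N`
has multiplicative order exactly `N` in `(ZMod (N²))ˣ`. -/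
theorem defe_base_orderOf (N : ℕ) (hN : 1 < N) (u : (ZMod (N ^ 2))ˣ)
    (hu : (u : ZMod (N ^ 2)) = 1 + (N : ZMod (N ^ 2))) :
    orderOf u = N := by
  rw [← orderOf_units, hu, orderOf_one_add_eq_addOrderOf (ZMod.natCast_mul_self_eq_zero_of_sq N),
    ZMod.addOrderOf_natCast_of_sq (by omega)]
end

section
/- Let N be a natural number with N > 1 and let m be a natural number with m < N. Then, computing in the natural numbers, (((1 + N)^m mod N²) − 1) / N = m. In particular the map m ↦ (1+N)^m mod N² is injective on {0, 1, …, N−1} and its inverse is computed by the linear formula (c − 1)/N. -/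
/-! Modulo `N²` every term of the binomial expansion of `(1 + N)^m` beyond the linear one
vanishes, so `(1 + N)^m ≡ 1 + m N`. For `m < N` this representative is already below `N²`,
hence it is the residue itself, and `m` is recovered by exact division. -/

theorem Nat.one_add_pow_modEq_one_add_mul (N m : ℕ) : (1 + N) ^ m ≡ 1 + m * N [MOD N ^ 2] := by
  rw [Nat.modEq_iff_dvd, ← dvd_neg]
  push_cast
  convert sq_dvd_add_pow_sub_sub (N : ℤ) 1 m using 1
  simp only [one_pow]
  ring

theorem Nat.one_add_pow_mod_sq {N m : ℕ} (hN : 1 < N) (hm : m < N) :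
    (1 + N) ^ m % N ^ 2 = 1 + m * N := by
  rw [Nat.one_add_pow_modEq_one_add_mul N m, Nat.mod_eq_of_lt]
  nlinarith

/-- For `N > 1`, computing in `ℕ`: for every `m < N`,
`(((1 + N)^m mod N²) − 1) / N = m`; in particular the map
`m ↦ (1+N)^m mod N²` is injective on `{0, 1, …, N−1}`,
with inverse given by the linear formula `(c − 1)/N`. -/
theorem defe_pow_mod_decrypt (N : ℕ) (hN : 1 < N) :
    (∀ m : ℕ, m < N → (((1 + N) ^ m % N ^ 2) - 1) / N = m) ∧
    Set.InjOn (fun m : ℕ => (1 + N) ^ m % N ^ 2) (Set.Iio N) := by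
  have hdecrypt :
      Set.LeftInvOn (fun c => (c - 1) / N) (fun m => (1 + N) ^ m % N ^ 2) (Set.Iio N) := by
    intro m hm
    simp only [Nat.one_add_pow_mod_sq hN hm, Nat.add_sub_cancel_left]
    exact Nat.mul_div_cancel m (by omega)
  exact ⟨fun m hm => hdecrypt hm, hdecrypt.injOn⟩
end

section
/- Let N and I be natural numbers with N > 1 and I ≥ 1, and let M be a positive real number satisfying 4·I·M² ≤ N. Let x, η, y : Fin I → ℤ satisfy |x i| < M, 0 ≤ η i and (η i : ℝ) < M, and |y i| < M for all i (bounds on the real coercions). Let S' = ∑ i, (x i + η i) · (y i) in ℤ. Then the minimal-absolute-value representative of (S' : ZMod N) equals S', and consequently ZMod.valMinAbs ((S' : ZMod N)) − ∑ i, (η i) · (y i) = ∑ i, (x i) · (y i). -/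
open Finset

/-! Since the noise is nonnegative and below `M`, every term `(x i + η i) * y i` has absolute
value below `2M²`, so `2|S'| < 4IM² ≤ N`; and an integer of absolute value below `N / 2` is its
own least-absolute-value residue modulo `N`. -/

lemma ZMod.valMinAbs_intCast_of_two_mul_abs_lt {n : ℕ} {a : ℤ} (h : 2 * |a| < n) :
    (a : ZMod n).valMinAbs = a := by
  have : NeZero n := .of_pos (by exact_mod_cast (by positivity : (0 : ℤ) ≤ 2 * |a|).trans_lt h)
  rw [ZMod.valMinAbs_spec]
  exact ⟨rfl, by constructor <;> linarith [neg_abs_le a, le_abs_self a]⟩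

lemma Finset.abs_sum_lt_card_mul {ι R : Type*} [Ring R] [LinearOrder R] [IsStrictOrderedRing R]
    {s : Finset ι} (hs : s.Nonempty) {f : ι → R} {B : R} (h : ∀ i ∈ s, |f i| < B) :
    |∑ i ∈ s, f i| < #s * B :=
  calc |∑ i ∈ s, f i| ≤ ∑ i ∈ s, |f i| := abs_sum_le_sum_abs f s
    _ < ∑ _i ∈ s, B := sum_lt_sum_of_nonempty hs h
    _ = #s * B := by rw [sum_const, nsmul_eq_mul]

lemma abs_add_mul_lt_two_mul_sq {R : Type*} [CommRing R] [LinearOrder R] [IsStrictOrderedRing R]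
    {x η y M : R} (hx : |x| < M) (hη0 : 0 ≤ η) (hη : η < M) (hy : |y| < M) :
    |(x + η) * y| < 2 * M ^ 2 :=
  calc |(x + η) * y| = |x + η| * |y| := abs_mul _ _
    _ < (M + M) * M := by
      refine mul_lt_mul'' ?_ hy (abs_nonneg _) (abs_nonneg _)
      calc |x + η| ≤ |x| + |η| := abs_add_le x η
        _ < M + M := by rw [abs_of_nonneg hη0]; exact add_lt_add hx hη
    _ = 2 * M ^ 2 := by ring

theorem defe_usrdec_correct_general (N I : ℕ) (hI : 1 ≤ I) (M : ℝ)
    (hMN : 4 * (I : ℝ) * M ^ 2 ≤ (N : ℝ))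
    (x η y : Fin I → ℤ)
    (hx : ∀ i, |(x i : ℝ)| < M)
    (hη0 : ∀ i, 0 ≤ η i) (hη : ∀ i, (η i : ℝ) < M)
    (hy : ∀ i, |(y i : ℝ)| < M) :
    ZMod.valMinAbs (((∑ i, (x i + η i) * y i : ℤ) : ZMod N))
        = ∑ i, (x i + η i) * y i ∧
    ZMod.valMinAbs (((∑ i, (x i + η i) * y i : ℤ) : ZMod N))
        - ∑ i, η i * y i = ∑ i, x i * y i := by
  have hS : |((∑ i, (x i + η i) * y i : ℤ) : ℝ)| < I * (2 * M ^ 2) := by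
    have hne : (univ : Finset (Fin I)).Nonempty := univ_nonempty_iff.mpr ⟨⟨0, hI⟩⟩
    push_cast
    simpa using abs_sum_lt_card_mul hne fun i _ ↦
      abs_add_mul_lt_two_mul_sq (hx i) (by exact_mod_cast hη0 i) (hη i) (hy i)
  have hrep : ZMod.valMinAbs (((∑ i, (x i + η i) * y i : ℤ) : ZMod N))
      = ∑ i, (x i + η i) * y i :=
    ZMod.valMinAbs_intCast_of_two_mul_abs_lt (by exact_mod_cast (by linarith :
      2 * |((∑ i, (x i + η i) * y i : ℤ) : ℝ)| < N))
  refine ⟨hrep, ?_⟩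
  rw [hrep, ← sum_sub_distrib]
  exact sum_congr rfl fun i _ ↦ by ring

/-- End-to-end DEFE plaintext recovery: under the magnitude bounds, the
minimal-absolute-value representative mod `N` of the noise-augmented inner
product `S' = ∑ i, (x i + η i)·(y i)` equals `S'` itself, and subtracting the
noise contribution `∑ i, η i · y i` recovers the true inner product
`∑ i, x i · y i`. -/
theorem defe_usrdec_correct (N I : ℕ) (hN : 1 < N) (hI : 1 ≤ I) (M : ℝ)
    (hM : 0 < M) (hMN : 4 * (I : ℝ) * M ^ 2 ≤ (N : ℝ))
    (x η y : Fin I → ℤ)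
    (hx : ∀ i, |(x i : ℝ)| < M)
    (hη0 : ∀ i, 0 ≤ η i) (hη : ∀ i, (η i : ℝ) < M)
    (hy : ∀ i, |(y i : ℝ)| < M) :
    ZMod.valMinAbs (((∑ i, (x i + η i) * y i : ℤ) : ZMod N))
        = ∑ i, (x i + η i) * y i ∧
    ZMod.valMinAbs (((∑ i, (x i + η i) * y i : ℤ) : ZMod N))
        - ∑ i, η i * y i = ∑ i, x i * y i :=
  defe_usrdec_correct_general N I hI M hMN x η y hx hη0 hη hy
end
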